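/- For every positive integer n, every orientation of a finite simple graph with chromatic number greater than n^2 contains an acyclic subgraph whose underlying undirected graph has chromatic number greater than n. -/
import Mathlib


/-- `E` is an orientation of the simple graph `G`: every edge of `G` gets exactly one
direction, and `E` only uses edges of `G`. -/
def IsOrientation {V : Type*} (G : SimpleGraph V) (E : V → V → Prop) : Prop :=
  (∀ u v, G.Adj u v ↔ (E u v ∨ E v u)) ∧ (∀ u v, ¬ (E u v ∧ E v u))

/-- A directed-edge relation is acyclic if there is no directed cycle. -/
def IsAcyclicRel {V : Type*} (E : V → V → Prop) : Prop :=
  ∀ v, ¬ Relation.TransGen E v v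

/-- For every positive integer `n`, every orientation of a finite simple graph with
chromatic number greater than `n²` contains an acyclic subgraph whose underlying
undirected graph has chromatic number greater than `n`. -/
theorem stmt12 (n : ℕ) (hn : 0 < n) (V : Type) [Fintype V] (G : SimpleGraph V)
    (E : V → V → Prop) (hor : IsOrientation G E)
    (hchi : ((n ^ 2 : ℕ) : ℕ∞) < G.chromaticNumber) :
    ∃ E' : V → V → Prop, (∀ u v, E' u v → E u v) ∧ IsAcyclicRel E' ∧
      (n : ℕ∞) < (SimpleGraph.fromRel E').chromaticNumber := by
  classical
  by_contra h
  push_neg at h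
  set f := Fintype.equivFin V with hf
  set E1 : V → V → Prop := fun u v => E u v ∧ f u < f v with hE1
  set E2 : V → V → Prop := fun u v => E u v ∧ f v < f u with hE2
  have hac : ∀ (E' : V → V → Prop) (g : V → ℕ), (∀ u v, E' u v → g u < g v) →
      IsAcyclicRel E' := by
    intro E' g hE' v hv
    have key : ∀ a b, Relation.TransGen E' a b → g a < g b := by
      intro a b hab
      induction hab with
      | single h => exact hE' _ _ h
      | tail _ h ih => exact ih.trans (hE' _ _ h)
    exact lt_irrefl _ (key v v hv)
  have h1 := h E1 (fun u v hv => hv.1)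
    (hac E1 (fun v => (f v : ℕ)) (fun u v hv => hv.2))
  have h2 := h E2 (fun u v hv => hv.1)
    (hac E2 (fun v => Fintype.card V - (f v : ℕ)) (fun u v hv => by
      have h1 := (f u).isLt
      have h2 := (f v).isLt
      have h3 : (f v : ℕ) < (f u : ℕ) := hv.2
      show Fintype.card V - (f u : ℕ) < Fintype.card V - (f v : ℕ)
      omega))
  rw [show ((n : ℕ∞)) = ((n : ℕ) : ℕ∞) from rfl,
    SimpleGraph.chromaticNumber_le_iff_colorable] at h1 h2
  obtain ⟨c1⟩ := h1
  obtain ⟨c2⟩ := h2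
  have cG : G.Coloring (Fin n × Fin n) := by
    refine SimpleGraph.Coloring.mk (fun v => (c1 v, c2 v)) ?_
    intro u v huv heq
    have hne : u ≠ v := G.ne_of_adj huv
    have hfne : f u ≠ f v := fun hh => hne (f.injective hh)
    have heq1 : c1 u = c1 v := congrArg Prod.fst heq
    have heq2 : c2 u = c2 v := congrArg Prod.snd heq
    rcases (hor.1 u v).1 huv with hE | hE
    · rcases lt_or_gt_of_ne hfne with hlt | hgt
      · exact c1.valid ((SimpleGraph.fromRel_adj E1 u v).2 ⟨hne, Or.inl ⟨hE, hlt⟩⟩) heq1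
      · exact c2.valid ((SimpleGraph.fromRel_adj E2 u v).2 ⟨hne, Or.inl ⟨hE, hgt⟩⟩) heq2
    · rcases lt_or_gt_of_ne hfne with hlt | hgt
      · exact c2.valid ((SimpleGraph.fromRel_adj E2 u v).2 ⟨hne, Or.inr ⟨hE, hlt⟩⟩) heq2
      · exact c1.valid ((SimpleGraph.fromRel_adj E1 u v).2 ⟨hne, Or.inr ⟨hE, hgt⟩⟩) heq1
  have hcol : G.Colorable (n ^ 2) := by
    have := cG.colorable
    rwa [Fintype.card_prod, Fintype.card_fin, ← sq] at this
  have := hcol.chromaticNumber_le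
  exact absurd hchi (not_lt.2 this)
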